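/- Let c : [t₀, ∞) → M_n(ℂ) be a differentiable map with c(t) positive definite for all t ≥ t₀, satisfying the noncommutative Ricci flow equation c′(t) = −Δ(log c(t)), and set c_∞ := τ(c(t₀))/n. Then the function v(t) := τ((c(t) − c_∞·1)²) = ‖c(t) − c_∞·1‖₂² is nonincreasing on [t₀, ∞); indeed its derivative equals −2τ(c(t)·Δ(log c(t))) ≤ 0. -/

import Mathlib

open Matrix
open scoped ComplexOrder

/-- The derivation `δ₁(a) = ya − ay`. -/
noncomputable def delta1 {n : ℕ} (y a : Matrix (Fin n) (Fin n) ℂ) : Matrix (Fin n) (Fin n) ℂ :=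
  y * a - a * y

/-- The derivation `δ₂(a) = ax − xa`. -/
noncomputable def delta2 {n : ℕ} (x a : Matrix (Fin n) (Fin n) ℂ) : Matrix (Fin n) (Fin n) ℂ :=
  a * x - x * a

/-- The Laplacian `Δ = δ₁∘δ₁ + δ₂∘δ₂`. -/
noncomputable def lap {n : ℕ} (x y a : Matrix (Fin n) (Fin n) ℂ) : Matrix (Fin n) (Fin n) ℂ :=
  delta1 y (delta1 y a) + delta2 x (delta2 x a)

/-- The logarithm of a positive definite (in particular Hermitian) matrix, via the
functional calculus: unitarily diagonalize and take the real logarithm of the eigenvalues. -/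
noncomputable def matLog {n : ℕ} (a : Matrix (Fin n) (Fin n) ℂ) : Matrix (Fin n) (Fin n) ℂ :=
  if h : a.IsHermitian then
    (h.eigenvectorUnitary : Matrix (Fin n) (Fin n) ℂ) *
      Matrix.diagonal (fun i => (Real.log (h.eigenvalues i) : ℂ)) *
      (star (h.eigenvectorUnitary : Matrix (Fin n) (Fin n) ℂ))
  else 0

/-- The generating condition: the only matrices commuting with both `u = exp((2πi/n)x)`
and `v = exp((2πi/n)y)` are the scalar multiples of the identity matrix. -/
def GenCond {n : ℕ} (x y : Matrix (Fin n) (Fin n) ℂ) : Prop :=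
  ∀ a : Matrix (Fin n) (Fin n) ℂ,
    a * NormedSpace.exp ((((2 * Real.pi : ℝ) : ℂ) * Complex.I / (n : ℂ)) • x)
      = NormedSpace.exp ((((2 * Real.pi : ℝ) : ℂ) * Complex.I / (n : ℂ)) • x) * a →
    a * NormedSpace.exp ((((2 * Real.pi : ℝ) : ℂ) * Complex.I / (n : ℂ)) • y)
      = NormedSpace.exp ((((2 * Real.pi : ℝ) : ℂ) * Complex.I / (n : ℂ)) • y) * a →
    ∃ z : ℂ, a = z • (1 : Matrix (Fin n) (Fin n) ℂ)

/-! Each of `δ₁, δ₂` is, up to sign, `⁅w, ·⁆` with `w` Hermitian, and `⁅w, ·⁆` is skew for the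
trace pairing, so `τ(a·Δ(log a)) = −τ(⁅y, a⁆⁅y, log a⁆) − τ(⁅x, a⁆⁅x, log a⁆)`. Diagonalising
`a = U·diag(e)·U*`, with `W = U*wU` one gets
`τ(⁅w, a⁆⁅w, log a⁆) = −∑ᵢⱼ |Wᵢⱼ|² (eᵢ − eⱼ)(log eᵢ − log eⱼ) ≤ 0`, because `log` is increasing.
Since `Δ` is trace free, the constant `c_∞·1` drops out of `v'(t) = −2τ(c(t)·Δ(log c(t)))`, which
is therefore a nonpositive real; integrating, `v` is nonincreasing. -/

namespace Matrix
variable {m R : Type*} [Fintype m] [CommRing R]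

theorem trace_lie (a b : Matrix m m R) : trace ⁅a, b⁆ = 0 := by
  rw [Ring.lie_def, trace_sub, trace_mul_comm, sub_self]

theorem trace_mul_lie (w a b : Matrix m m R) : trace (a * ⁅w, b⁆) = -trace (⁅w, a⁆ * b) := by
  simp only [Ring.lie_def, Matrix.mul_sub, Matrix.sub_mul, trace_sub, Matrix.mul_assoc]
  rw [← Matrix.mul_assoc a b w, trace_mul_comm (a * b) w]
  ring

theorem trace_lie_diagonal_mul_lie_diagonal [DecidableEq m] (W : Matrix m m R) (μ ν : m → R) :
    trace (⁅W, diagonal μ⁆ * ⁅W, diagonal ν⁆) =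
      ∑ i, ∑ j, W i j * W j i * ((μ j - μ i) * (ν i - ν j)) := by
  have lie_diagonal (ρ : m → R) : ⁅W, diagonal ρ⁆ = of fun i j => W i j * (ρ j - ρ i) := by
    ext i j
    simp only [Ring.lie_def, sub_apply, mul_diagonal, diagonal_mul, of_apply]
    ring
  simp only [lie_diagonal, trace, diag_apply, mul_apply, of_apply]
  exact Finset.sum_congr rfl fun i _ => Finset.sum_congr rfl fun j _ => by ring

theorem trace_conjStarAlgAut [DecidableEq m] [StarRing R] (U : unitary (Matrix m m R))
    (a : Matrix m m R) : trace (Unitary.conjStarAlgAut R _ U a) = trace a := by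
  rw [Unitary.conjStarAlgAut_apply, trace_mul_comm, ← Matrix.mul_assoc, Unitary.coe_star_mul_self,
    Matrix.one_mul]

theorem IsHermitian.trace_lie_diagonal_mul_lie_diagonal_nonpos [DecidableEq m] {W : Matrix m m ℂ}
    (hW : W.IsHermitian) {μ ν : m → ℝ} (hνμ : Monovary ν μ) :
    trace (⁅W, diagonal fun i => (μ i : ℂ)⁆ * ⁅W, diagonal fun i => (ν i : ℂ)⁆) ≤ 0 := by
  rw [trace_lie_diagonal_mul_lie_diagonal]
  refine Finset.sum_nonpos fun i _ => Finset.sum_nonpos fun j _ => ?_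
  rw [← hW.apply j i, Complex.star_def, Complex.mul_conj]
  have hterm := hνμ.sub_mul_sub_nonneg i j
  have hcast : ((μ j : ℂ) - μ i) * (ν i - ν j) = ((-((ν j - ν i) * (μ j - μ i)) : ℝ) : ℂ) := by
    push_cast
    ring
  rw [hcast]
  exact_mod_cast mul_nonpos_of_nonneg_of_nonpos (Complex.normSq_nonneg _) (neg_nonpos.2 hterm)

end Matrix

theorem Matrix.hasDerivWithinAt_trace_mul {m 𝕜 𝔸 : Type*} [Fintype m] [NontriviallyNormedField 𝕜]
    [NormedCommRing 𝔸] [NormedAlgebra 𝕜 𝔸] {A B : 𝕜 → Matrix m m 𝔸} {A' B' : Matrix m m 𝔸}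
    {s : Set 𝕜} {t : 𝕜} (hA : ∀ i j, HasDerivWithinAt (fun τ => A τ i j) (A' i j) s t)
    (hB : ∀ i j, HasDerivWithinAt (fun τ => B τ i j) (B' i j) s t) :
    HasDerivWithinAt (fun τ => trace (A τ * B τ)) (trace (A' * B t + A t * B')) s t := by
  simp only [trace, diag_apply, mul_apply, add_apply, ← Finset.sum_add_distrib]
  exact HasDerivWithinAt.fun_sum fun i _ => HasDerivWithinAt.fun_sum fun j _ =>
    (hA i j).fun_mul (hB j i)

theorem Complex.antitoneOn_of_hasDerivWithinAt_nonpos {D : Set ℝ} (hD : Convex ℝ D)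
    {f f' : ℝ → ℂ} (hf : ContinuousOn f D)
    (hf' : ∀ x ∈ interior D, HasDerivWithinAt f (f' x) (interior D) x)
    (hf'₀ : ∀ x ∈ interior D, f' x ≤ 0) : AntitoneOn f D := by
  have hre (x) (hx : x ∈ interior D) :
      HasDerivWithinAt (fun t => (f t).re) (f' x).re (interior D) x :=
    Complex.reCLM.hasFDerivAt.comp_hasDerivWithinAt x (hf' x hx)
  have him (x) (hx : x ∈ interior D) :
      HasDerivWithinAt (fun t => (f t).im) (f' x).im (interior D) x :=
    Complex.imCLM.hasFDerivAt.comp_hasDerivWithinAt x (hf' x hx)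
  have hre_nonpos (x) (hx : x ∈ interior D) : (f' x).re ≤ 0 := (Complex.le_def.1 (hf'₀ x hx)).1
  have him_zero (x) (hx : x ∈ interior D) : (f' x).im = 0 := (Complex.le_def.1 (hf'₀ x hx)).2
  intro s hs t ht hst
  refine Complex.le_def.2 ⟨?_, le_antisymm ?_ ?_⟩
  · exact _root_.antitoneOn_of_hasDerivWithinAt_nonpos hD
      (Complex.continuous_re.comp_continuousOn hf) hre hre_nonpos hs ht hst
  · exact _root_.antitoneOn_of_hasDerivWithinAt_nonpos hD
      (Complex.continuous_im.comp_continuousOn hf) him (fun x hx => (him_zero x hx).le) hs ht hst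
  · exact monotoneOn_of_hasDerivWithinAt_nonneg hD
      (Complex.continuous_im.comp_continuousOn hf) him (fun x hx => (him_zero x hx).ge) hs ht hst

section
variable {n : ℕ}

theorem Matrix.PosDef.trace_lie_mul_lie_matLog_nonpos {a w : Matrix (Fin n) (Fin n) ℂ}
    (ha : a.PosDef) (hw : w.IsHermitian) : trace (⁅w, a⁆ * ⁅w, matLog a⁆) ≤ 0 := by
  set φ := Unitary.conjStarAlgAut ℂ _ ha.isHermitian.eigenvectorUnitary
  set e := ha.isHermitian.eigenvalues
  have ha_eq : a = φ (diagonal fun i => (e i : ℂ)) := ha.isHermitian.spectral_theorem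
  have hlog_eq : matLog a = φ (diagonal fun i => (Real.log (e i) : ℂ)) := dif_pos ha.isHermitian
  have map_lie (b c : Matrix (Fin n) (Fin n) ℂ) : φ ⁅b, c⁆ = ⁅φ b, φ c⁆ := by
    simp only [Ring.lie_def, map_sub, map_mul]
  rw [hlog_eq, ha_eq, ← φ.apply_symm_apply w, ← map_lie, ← map_lie, ← map_mul,
    trace_conjStarAlgAut]
  refine IsHermitian.trace_lie_diagonal_mul_lie_diagonal_nonpos ?_ fun i j hij => ?_
  · exact (hw.isSelfAdjoint.map φ.symm).isHermitian
  · exact Real.log_le_log (ha.eigenvalues_pos i) hij.le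

theorem lap_eq_lie (x y a : Matrix (Fin n) (Fin n) ℂ) :
    lap x y a = ⁅y, ⁅y, a⁆⁆ + ⁅x, ⁅x, a⁆⁆ := by
  simp only [lap, delta1, delta2, Ring.lie_def]
  noncomm_ring

theorem trace_lap (x y a : Matrix (Fin n) (Fin n) ℂ) : trace (lap x y a) = 0 := by
  rw [lap_eq_lie, trace_add, trace_lie, trace_lie, add_zero]

theorem Matrix.PosDef.trace_mul_lap_matLog_nonneg {x y a : Matrix (Fin n) (Fin n) ℂ}
    (hx : x.IsHermitian) (hy : y.IsHermitian) (ha : a.PosDef) :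
    0 ≤ trace (a * lap x y (matLog a)) := by
  rw [lap_eq_lie, Matrix.mul_add, trace_add, trace_mul_lie y, trace_mul_lie x]
  exact add_nonneg (neg_nonneg.2 (ha.trace_lie_mul_lie_matLog_nonpos hy))
    (neg_nonneg.2 (ha.trace_lie_mul_lie_matLog_nonpos hx))

end

theorem ricci_flow_hs_distance_nonincreasing_general (n : ℕ)
    (x y : Matrix (Fin n) (Fin n) ℂ)
    (hx : x.IsHermitian) (hy : y.IsHermitian)
    (t₀ : ℝ) (c : ℝ → Matrix (Fin n) (Fin n) ℂ)
    (hpos : ∀ t ∈ Set.Ici t₀, (c t).PosDef)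
    (hflow : ∀ t ∈ Set.Ici t₀, ∀ i j, HasDerivWithinAt (fun s => c s i j)
      ((-(lap x y (matLog (c t)))) i j) (Set.Ici t₀) t) :
    (∀ t ∈ Set.Ici t₀,
      HasDerivWithinAt
        (fun s => ((c s - ((c t₀).trace / (n : ℂ)) • (1 : Matrix (Fin n) (Fin n) ℂ)) *
          (c s - ((c t₀).trace / (n : ℂ)) • (1 : Matrix (Fin n) (Fin n) ℂ))).trace)
        (-2 * ((c t) * lap x y (matLog (c t))).trace) (Set.Ici t₀) t ∧
      -2 * ((c t) * lap x y (matLog (c t))).trace ≤ 0) ∧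
    (∀ s ∈ Set.Ici t₀, ∀ t ∈ Set.Ici t₀, s ≤ t →
      ((c t - ((c t₀).trace / (n : ℂ)) • (1 : Matrix (Fin n) (Fin n) ℂ)) *
        (c t - ((c t₀).trace / (n : ℂ)) • (1 : Matrix (Fin n) (Fin n) ℂ))).trace ≤
      ((c s - ((c t₀).trace / (n : ℂ)) • (1 : Matrix (Fin n) (Fin n) ℂ)) *
        (c s - ((c t₀).trace / (n : ℂ)) • (1 : Matrix (Fin n) (Fin n) ℂ))).trace) := by
  set k : Matrix (Fin n) (Fin n) ℂ := ((c t₀).trace / (n : ℂ)) • 1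
  have hderiv (t) (ht : t ∈ Set.Ici t₀) : HasDerivWithinAt (fun s => trace ((c s - k) * (c s - k)))
      (-2 * trace (c t * lap x y (matLog (c t)))) (Set.Ici t₀) t := by
    have hentry (i j) : HasDerivWithinAt (fun s => (c s - k) i j)
        ((-lap x y (matLog (c t))) i j) (Set.Ici t₀) t :=
      (hflow t ht i j).sub_const (k i j)
    refine (hasDerivWithinAt_trace_mul hentry hentry).congr_deriv ?_
    simp only [k, trace_add, Matrix.sub_mul, Matrix.mul_sub, Matrix.mul_neg, Matrix.neg_mul,
      trace_sub, trace_neg, smul_mul, Matrix.one_mul, Matrix.mul_smul, Matrix.mul_one, trace_smul,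
      trace_lap, smul_zero, trace_mul_comm (lap x y (matLog (c t))) (c t)]
    ring
  have hnonpos (t) (ht : t ∈ Set.Ici t₀) : -2 * trace (c t * lap x y (matLog (c t))) ≤ 0 :=
    mul_nonpos_of_nonpos_of_nonneg (by norm_num) ((hpos t ht).trace_mul_lap_matLog_nonneg hx hy)
  refine ⟨fun t ht => ⟨hderiv t ht, hnonpos t ht⟩, fun s hs t ht hst => ?_⟩
  refine Complex.antitoneOn_of_hasDerivWithinAt_nonpos (convex_Ici t₀)
    (fun t ht => (hderiv t ht).continuousWithinAt)
    (fun t ht => (hderiv t (interior_subset ht)).mono interior_subset)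
    (fun t ht => hnonpos t (interior_subset ht)) hs ht hst

/-- Along the noncommutative Ricci flow, `v(t) = τ((c(t) − c_∞·1)²) = ‖c(t) − c_∞·1‖₂²` has
derivative `−2τ(c(t)·Δ(log c(t))) ≤ 0` and is nonincreasing (inequalities phrased via the
order on `ℂ`). -/
theorem ricci_flow_hs_distance_nonincreasing (n : ℕ) (hn : 0 < n)
    (x y : Matrix (Fin n) (Fin n) ℂ)
    (hx : x.IsHermitian) (hy : y.IsHermitian) (hgen : GenCond x y)
    (t₀ : ℝ) (c : ℝ → Matrix (Fin n) (Fin n) ℂ)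
    (hpos : ∀ t ∈ Set.Ici t₀, (c t).PosDef)
    (hflow : ∀ t ∈ Set.Ici t₀, ∀ i j, HasDerivWithinAt (fun s => c s i j)
      ((-(lap x y (matLog (c t)))) i j) (Set.Ici t₀) t) :
    (∀ t ∈ Set.Ici t₀,
      HasDerivWithinAt
        (fun s => ((c s - ((c t₀).trace / (n : ℂ)) • (1 : Matrix (Fin n) (Fin n) ℂ)) *
          (c s - ((c t₀).trace / (n : ℂ)) • (1 : Matrix (Fin n) (Fin n) ℂ))).trace)
        (-2 * ((c t) * lap x y (matLog (c t))).trace) (Set.Ici t₀) t ∧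
      -2 * ((c t) * lap x y (matLog (c t))).trace ≤ 0) ∧
    (∀ s ∈ Set.Ici t₀, ∀ t ∈ Set.Ici t₀, s ≤ t →
      ((c t - ((c t₀).trace / (n : ℂ)) • (1 : Matrix (Fin n) (Fin n) ℂ)) *
        (c t - ((c t₀).trace / (n : ℂ)) • (1 : Matrix (Fin n) (Fin n) ℂ))).trace ≤
      ((c s - ((c t₀).trace / (n : ℂ)) • (1 : Matrix (Fin n) (Fin n) ℂ)) *
        (c s - ((c t₀).trace / (n : ℂ)) • (1 : Matrix (Fin n) (Fin n) ℂ))).trace) :=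
  ricci_flow_hs_distance_nonincreasing_general n x y hx hy t₀ c hpos hflow
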